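/- Let (Ω, ℱ, μ) be a probability space, 1 ≤ p < ∞, a < b, θ ∈ (0,1], θ' ∈ (0,θ), and c₁ ≥ 0. Let (Z_t)_{t∈[a,b)} be a family of ℝ^d-valued random variables in L^p(μ) with ‖Z_t − Z_s‖_p ≤ c₁ (∫_s^t (b−r)^{θ−2} dr)^{1/2} for all a ≤ s < t < b. For n ≥ 1 let (t_k)_{k=0}^n be the θ'-net on [a,b]. Then there exists a constant C > 0, depending only on c₁, θ, θ' and b−a, such that for all n ≥ 1 one has Σ_{k=1}^n ∫_{t_{k−1}}^{t_k} ‖Z_t − Z_{t_{k−1}}‖_p² dt ≤ C/n, where the k = n summand is the integral over [t_{n−1}, b). -/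

import Mathlib

/-!
Fix an exponent `c ∈ (θ', θ)`; then `c < 1`, which avoids the logarithm that `θ = 1` would
produce. Since `(b - r) ^ (θ - 2) ≤ (b - a) ^ (θ - c) (b - r) ^ (c - 2)`, the hypothesis gives
`‖Z_t - Z_s‖_p² ≤ C (f t - f s)` with `f t = (b - t) ^ (c - 1)` increasing. Hence the integral
over the cell `[t_{k-1}, t_k)` is at most `C (t_k - t_{k-1}) (f t_k - f t_{k-1})`, and over the
last cell at most `C ∫ f = C (b - t_{n-1}) ^ c / c`. Along the `θ'`-net
`b - t_k = (b - a) ((n - k) / n) ^ (1 / θ')`, so by the mean value theorem the `k`-th cell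
contributes `O(n⁻² ((n - k) / n) ^ (c / θ' - 2))`. As `c / θ' - 2 > -1` these Riemann-type sums
are `O(1 / n)`, and since `c / θ' > 1` so is the last cell.
-/

open MeasureTheory
open scoped ENNReal

/-- The `θ'`-net `(t_k^{n,θ'})_{k=0}^n` on `[a,b]`:
`t_k := a + (b−a) (1 − (1 − k/n)^{1/θ'})`. -/
noncomputable def thetaNet (θ a b : ℝ) (n k : ℕ) : ℝ :=
  a + (b - a) * (1 - (1 - (k : ℝ) / (n : ℝ)) ^ ((1 : ℝ) / θ))

lemma exists_rpow_sub_rpow_eq (r : ℝ) {z y : ℝ} (hz : 0 < z) (hzy : z < y) :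
    ∃ ξ ∈ Set.Ioo z y, y ^ r - z ^ r = r * ξ ^ (r - 1) * (y - z) := by
  obtain ⟨ξ, hξ, hslope⟩ := exists_hasDerivAt_eq_slope (fun x : ℝ => x ^ r)
    (fun x => r * x ^ (r - 1)) hzy
    (continuousOn_id.rpow_const fun x hx => Or.inl (hz.trans_le hx.1).ne')
    (fun x hx => Real.hasDerivAt_rpow_const (Or.inl (hz.trans hx.1).ne'))
  exact ⟨ξ, hξ, by rw [hslope, div_mul_cancel₀ _ (sub_ne_zero.mpr hzy.ne')]⟩

lemma rpow_sub_rpow_le_of_one_le {q z y : ℝ} (hq : 1 ≤ q) (hz : 0 < z) (hzy : z < y) :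
    y ^ q - z ^ q ≤ q * y ^ (q - 1) * (y - z) := by
  obtain ⟨ξ, hξ, he⟩ := exists_rpow_sub_rpow_eq q hz hzy
  rw [he]
  gcongr <;> linarith [hξ.1, hξ.2]

lemma rpow_sub_rpow_le_of_nonpos {γ z y : ℝ} (hγ : γ ≤ 0) (hz : 0 < z) (hzy : z < y) :
    z ^ γ - y ^ γ ≤ -γ * z ^ (γ - 1) * (y - z) := by
  obtain ⟨ξ, hξ, he⟩ := exists_rpow_sub_rpow_eq γ hz hzy
  have hξz : ξ ^ (γ - 1) ≤ z ^ (γ - 1) :=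
    Real.rpow_le_rpow_of_nonpos hz hξ.1.le (by linarith)
  nlinarith [mul_le_mul_of_nonneg_left hξz (mul_nonneg (neg_nonneg.mpr hγ) (sub_pos.mpr hzy).le)]

lemma rpow_sub_rpow_mul_rpow_sub_rpow_le {q γ z y : ℝ} (hq : 1 ≤ q) (hγ : γ ≤ 0)
    (hz : 0 < z) (hzy : z < y) (hy : y ≤ 2 * z) :
    (y ^ q - z ^ q) * (z ^ γ - y ^ γ) ≤ q * -γ * 2 ^ (q - 1) * z ^ (q + γ - 2) * (y - z) ^ 2 :=
  calc (y ^ q - z ^ q) * (z ^ γ - y ^ γ)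
      ≤ (q * y ^ (q - 1) * (y - z)) * (-γ * z ^ (γ - 1) * (y - z)) := by
        refine mul_le_mul (rpow_sub_rpow_le_of_one_le hq hz hzy)
          (rpow_sub_rpow_le_of_nonpos hγ hz hzy) ?_ ?_
        · exact sub_nonneg.mpr (Real.rpow_le_rpow_of_nonpos hz hzy.le hγ)
        · exact mul_nonneg (mul_nonneg (by linarith) (Real.rpow_nonneg (hz.trans hzy).le _))
            (sub_pos.mpr hzy).le
    _ ≤ (q * (2 * z) ^ (q - 1) * (y - z)) * (-γ * z ^ (γ - 1) * (y - z)) := by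
        have hyz := sub_pos.mpr hzy
        have : 0 ≤ -γ * z ^ (γ - 1) * (y - z) :=
          mul_nonneg (mul_nonneg (neg_nonneg.mpr hγ) (Real.rpow_nonneg hz.le _)) hyz.le
        gcongr
        linarith
    _ = q * -γ * 2 ^ (q - 1) * z ^ (q + γ - 2) * (y - z) ^ 2 := by
        rw [Real.mul_rpow zero_le_two hz.le, show q + γ - 2 = (q - 1) + (γ - 1) by ring,
          Real.rpow_add hz]
        ring

lemma sum_Icc_natCast_rpow_le {β : ℝ} (hβ : -1 < β) (n : ℕ) :
    ∑ j ∈ Finset.Icc 1 n, (j : ℝ) ^ β ≤ (1 + 1 / (β + 1)) * (n : ℝ) ^ (β + 1) := by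
  have hβ1 : 0 < β + 1 := by linarith
  have hK : 1 ≤ 1 + 1 / (β + 1) := by have := one_div_pos.mpr hβ1; linarith
  rcases le_or_gt 0 β with hβ0 | hβ0
  · calc ∑ j ∈ Finset.Icc 1 n, (j : ℝ) ^ β
        ≤ ∑ _j ∈ Finset.Icc 1 n, (n : ℝ) ^ β :=
          Finset.sum_le_sum fun j hj => by gcongr; exact_mod_cast (Finset.mem_Icc.mp hj).2
      _ = (n : ℝ) ^ (β + 1) := by
          rw [Finset.sum_const, Nat.card_Icc, nsmul_eq_mul, Real.rpow_add_one' (by positivity)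
            (by linarith)]
          push_cast; ring
      _ ≤ (1 + 1 / (β + 1)) * (n : ℝ) ^ (β + 1) :=
          le_mul_of_one_le_left (by positivity) hK
  · rcases n with _ | m
    · simp [Real.zero_rpow hβ1.ne']
    have hanti : AntitoneOn (fun x : ℝ => x ^ β) (Set.Icc 1 (1 + m)) := fun x hx y _ hxy =>
      Real.rpow_le_rpow_of_nonpos (zero_lt_one.trans_le hx.1) hxy hβ0.le
    have hint : ∫ x in (1 : ℝ)..1 + m, x ^ β = (((m + 1 : ℕ) : ℝ) ^ (β + 1) - 1) / (β + 1) := by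
      rw [integral_rpow (Or.inl hβ), Real.one_rpow]; push_cast; ring_nf
    have hone : 1 ≤ ((m + 1 : ℕ) : ℝ) ^ (β + 1) :=
      Real.one_le_rpow (by norm_cast; omega) hβ1.le
    calc ∑ j ∈ Finset.Icc 1 (m + 1), (j : ℝ) ^ β
        = ∑ i ∈ Finset.range m, ((1 : ℝ) + ↑(i + 1)) ^ β + 1 := by
          rw [← Finset.Ico_add_one_right_eq_Icc, Finset.sum_Ico_eq_sum_range,
            Nat.add_sub_cancel, Finset.sum_range_succ']
          simp
      _ ≤ (((m + 1 : ℕ) : ℝ) ^ (β + 1) - 1) / (β + 1) + 1 := by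
          gcongr; exact (hanti.sum_le_integral).trans_eq hint
      _ ≤ (1 + 1 / (β + 1)) * ((m + 1 : ℕ) : ℝ) ^ (β + 1) := by
          rw [sub_div, add_mul, one_mul, div_mul_eq_mul_div, one_mul]
          linarith [div_le_div_of_nonneg_right hone hβ1.le]

lemma sum_Ico_div_rpow_le {β : ℝ} (hβ : -1 < β) (n : ℕ) :
    ∑ j ∈ Finset.Ico 1 n, ((j : ℝ) / n) ^ β ≤ (1 + 1 / (β + 1)) * n := by
  rcases n.eq_zero_or_pos with rfl | hn
  · simp
  have hn0 : (0 : ℝ) < n := by exact_mod_cast hn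
  simp_rw [Real.div_rpow (Nat.cast_nonneg _) hn0.le, ← Finset.sum_div]
  rw [div_le_iff₀ (Real.rpow_pos_of_pos hn0 β), mul_assoc, ← Real.rpow_one_add' hn0.le
    (by linarith), add_comm 1 β]
  exact (Finset.sum_le_sum_of_subset_of_nonneg Finset.Ico_subset_Icc_self fun j _ _ =>
    Real.rpow_nonneg j.cast_nonneg β).trans (sum_Icc_natCast_rpow_le hβ n)

lemma integral_sub_rpow_le {a b s t θ c : ℝ} (hcθ : c ≤ θ) (hc : c < 1) (has : a ≤ s)
    (hst : s ≤ t) (htb : t < b) :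
    ∫ r in s..t, (b - r) ^ (θ - 2)
      ≤ (b - a) ^ (θ - c) / (1 - c) * ((b - t) ^ (c - 1) - (b - s) ^ (c - 1)) := by
  have hcont : ∀ e : ℝ, ContinuousOn (fun r : ℝ => (b - r) ^ e) (Set.uIcc s t) := fun e =>
    (continuousOn_const.sub continuousOn_id).rpow_const fun r hr =>
      Or.inl (show b - r ≠ 0 from (sub_pos.mpr ((Set.uIcc_of_le hst ▸ hr).2.trans_lt htb)).ne')
  calc ∫ r in s..t, (b - r) ^ (θ - 2)
      ≤ ∫ r in s..t, (b - a) ^ (θ - c) * (b - r) ^ (c - 2) := by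
        refine intervalIntegral.integral_mono_on hst (hcont _).intervalIntegrable
          ((hcont _).intervalIntegrable.const_mul _) fun r hr => ?_
        have hbr : 0 < b - r := by linarith [hr.2]
        rw [show θ - 2 = (θ - c) + (c - 2) by ring, Real.rpow_add hbr]
        gcongr
        linarith [hr.1]
    _ = (b - a) ^ (θ - c) * ∫ u in (b - t)..(b - s), u ^ (c - 2) := by
        rw [intervalIntegral.integral_const_mul,
          intervalIntegral.integral_comp_sub_left (fun u => u ^ (c - 2))]
    _ = (b - a) ^ (θ - c) / (1 - c) * ((b - t) ^ (c - 1) - (b - s) ^ (c - 1)) := by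
        rw [integral_rpow (Or.inr ⟨by linarith, Set.notMem_uIcc_of_lt (by linarith) (by linarith)⟩),
          show c - 2 + 1 = c - 1 by ring]
        field_simp [sub_ne_zero.mpr hc.ne, sub_ne_zero.mpr hc.ne']
        ring

lemma eLpNorm_sub_sq_le {Ω E : Type*} {mΩ : MeasurableSpace Ω} [NormedAddCommGroup E]
    (μ : Measure Ω) (p : ℝ≥0∞) {a b θ c c₁ : ℝ} (hcθ : c ≤ θ) (hc : c < 1) (hc₁ : 0 ≤ c₁)
    {Z : ℝ → Ω → E}
    (hZ : ∀ s t : ℝ, a ≤ s → s < t → t < b →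
      eLpNorm (Z t - Z s) p μ
        ≤ ENNReal.ofReal (c₁ * (∫ r in s..t, (b - r) ^ (θ - 2)) ^ ((1 : ℝ) / 2)))
    {s t : ℝ} (has : a ≤ s) (hst : s ≤ t) (htb : t < b) :
    eLpNorm (Z t - Z s) p μ ^ 2 ≤ ENNReal.ofReal (c₁ ^ 2 * (b - a) ^ (θ - c) / (1 - c) *
      ((b - t) ^ (c - 1) - (b - s) ^ (c - 1))) := by
  rcases hst.eq_or_lt with rfl | hst'
  · simp
  have hI : 0 ≤ ∫ r in s..t, (b - r) ^ (θ - 2) :=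
    intervalIntegral.integral_nonneg hst fun r hr => Real.rpow_nonneg (by linarith [hr.2]) _
  calc eLpNorm (Z t - Z s) p μ ^ 2
      ≤ ENNReal.ofReal (c₁ * (∫ r in s..t, (b - r) ^ (θ - 2)) ^ ((1 : ℝ) / 2)) ^ 2 := by
        gcongr; exact hZ s t has hst' htb
    _ = ENNReal.ofReal (c₁ ^ 2 * ∫ r in s..t, (b - r) ^ (θ - 2)) := by
        rw [← Real.sqrt_eq_rpow, ← ENNReal.ofReal_pow (by positivity), mul_pow,
          Real.sq_sqrt hI]
    _ ≤ _ := by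
        rw [mul_div_assoc, mul_assoc]
        gcongr
        exact integral_sub_rpow_le hcθ hc has hst htb

lemma monotoneOn_sub_rpow {b c : ℝ} (hc : c ≤ 1) :
    MonotoneOn (fun u : ℝ => (b - u) ^ (c - 1)) (Set.Iio b) := fun _ _ v hv huv =>
  Real.rpow_le_rpow_of_nonpos (sub_pos.mpr hv) (by linarith) (by linarith)

lemma setLIntegral_Ico_le_of_monotoneOn {f : ℝ → ℝ≥0∞} {F : ℝ → ℝ} {s t : ℝ} (hst : s ≤ t)
    (hF : MonotoneOn F (Set.Icc s t)) (hf : ∀ u ∈ Set.Ico s t, f u ≤ ENNReal.ofReal (F u - F s)) :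
    ∫⁻ u in Set.Ico s t, f u ≤ ENNReal.ofReal ((t - s) * (F t - F s)) := by
  have hmem : ∀ {u}, u ∈ Set.Ico s t → u ∈ Set.Icc s t := fun hu => Set.Ico_subset_Icc_self hu
  calc ∫⁻ u in Set.Ico s t, f u ≤ ∫⁻ _ in Set.Ico s t, ENNReal.ofReal (F t - F s) :=
        setLIntegral_mono measurable_const fun u hu => (hf u hu).trans <|
          ENNReal.ofReal_le_ofReal (by linarith [hF (hmem hu) (Set.right_mem_Icc.mpr hst) hu.2.le])
    _ = ENNReal.ofReal ((t - s) * (F t - F s)) := by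
        rw [setLIntegral_const, Real.volume_Ico, ← ENNReal.ofReal_mul' (sub_nonneg.mpr hst),
          mul_comm]

lemma setLIntegral_Ico_sub_rpow {s b c : ℝ} (hc : 0 < c) (hsb : s ≤ b) :
    ∫⁻ u in Set.Ico s b, ENNReal.ofReal ((b - u) ^ (c - 1)) = ENNReal.ofReal ((b - s) ^ c / c) := by
  have hint : IntervalIntegrable (fun u : ℝ => (b - u) ^ (c - 1)) volume s b := by
    simpa using (intervalIntegral.intervalIntegrable_rpow' (by linarith : -1 < c - 1)
      (a := b - s) (b := 0)).comp_sub_left b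
  rw [Measure.restrict_congr_set Ico_ae_eq_Ioc, ← ofReal_integral_eq_lintegral_ofReal
    ((intervalIntegrable_iff_integrableOn_Ioc_of_le hsb).mp hint)
    ((ae_restrict_mem measurableSet_Ioc).mono fun u hu => Real.rpow_nonneg (by linarith [hu.2]) _),
    ← intervalIntegral.integral_of_le hsb,
    intervalIntegral.integral_comp_sub_left (fun u => u ^ (c - 1)), sub_self,
    integral_rpow (Or.inl (by linarith)), sub_add_cancel, Real.zero_rpow hc.ne', sub_zero]

section ThetaNet

variable {θ a b c : ℝ} {n k l : ℕ}

lemma sub_thetaNet (θ a b : ℝ) (n k : ℕ) :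
    b - thetaNet θ a b n k = (b - a) * (1 - (k : ℝ) / n) ^ (1 / θ) := by
  unfold thetaNet; ring

lemma sub_thetaNet_of_le (hn : n ≠ 0) (hk : k ≤ n) :
    b - thetaNet θ a b n k = (b - a) * (((n - k : ℕ) : ℝ) / n) ^ (1 / θ) := by
  rw [sub_thetaNet, Nat.cast_sub hk, sub_div, div_self (Nat.cast_ne_zero.mpr hn)]

lemma thetaNet_zero (θ a b : ℝ) (n : ℕ) : thetaNet θ a b n 0 = a := by
  simp [thetaNet]

lemma thetaNet_self (hθ : 0 < θ) (hn : n ≠ 0) : thetaNet θ a b n n = b := by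
  have h := sub_thetaNet_of_le (θ := θ) (a := a) (b := b) hn le_rfl
  rw [Nat.sub_self, Nat.cast_zero, zero_div, Real.zero_rpow (one_div_pos.mpr hθ).ne',
    mul_zero] at h
  linarith

lemma thetaNet_lt (hab : a < b) (hk : k < n) : thetaNet θ a b n k < b := by
  have hx : 0 < 1 - (k : ℝ) / n := by
    rw [sub_pos, div_lt_one (by exact_mod_cast (Nat.zero_le k).trans_lt hk)]
    exact_mod_cast hk
  have := sub_thetaNet θ a b n k
  have : 0 < (b - a) * (1 - (k : ℝ) / n) ^ (1 / θ) :=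
    mul_pos (sub_pos.mpr hab) (Real.rpow_pos_of_pos hx _)
  linarith

lemma thetaNet_le_thetaNet (hθ : 0 < θ) (hab : a ≤ b) (hkl : k ≤ l) (hl : l ≤ n) :
    thetaNet θ a b n k ≤ thetaNet θ a b n l := by
  have hx : 0 ≤ 1 - (l : ℝ) / n :=
    sub_nonneg.mpr (div_le_one_of_le₀ (by exact_mod_cast hl) n.cast_nonneg)
  have hxy : 1 - (l : ℝ) / n ≤ 1 - (k : ℝ) / n := by gcongr
  have := sub_thetaNet θ a b n k
  have := sub_thetaNet θ a b n l
  have : (b - a) * (1 - (l : ℝ) / n) ^ (1 / θ) ≤ (b - a) * (1 - (k : ℝ) / n) ^ (1 / θ) := by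
    gcongr
  linarith

lemma a_le_thetaNet (hθ : 0 < θ) (hab : a ≤ b) (hk : k ≤ n) : a ≤ thetaNet θ a b n k :=
  (thetaNet_zero θ a b n).symm.le.trans (thetaNet_le_thetaNet hθ hab k.zero_le hk)

noncomputable def thetaNetVariation (θ a b c : ℝ) (n : ℕ) : ℝ :=
  ∑ k ∈ Finset.Ico 1 n, (thetaNet θ a b n k - thetaNet θ a b n (k - 1)) *
      ((b - thetaNet θ a b n k) ^ (c - 1) - (b - thetaNet θ a b n (k - 1)) ^ (c - 1)) +
    (b - thetaNet θ a b n (n - 1)) ^ c / c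

lemma thetaNet_increment_mul_eq (hc : c ≠ 0) (hab : a ≤ b) (hk1 : 1 ≤ k) (hkn : k ≤ n) :
    (thetaNet θ a b n k - thetaNet θ a b n (k - 1)) *
        ((b - thetaNet θ a b n k) ^ (c - 1) - (b - thetaNet θ a b n (k - 1)) ^ (c - 1))
      = (b - a) ^ c *
        (((((n - k + 1 : ℕ) : ℝ) / n) ^ (1 / θ) - (((n - k : ℕ) : ℝ) / n) ^ (1 / θ)) *
          ((((n - k : ℕ) : ℝ) / n) ^ (1 / θ * (c - 1)) -
            (((n - k + 1 : ℕ) : ℝ) / n) ^ (1 / θ * (c - 1)))) := by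
  have hpow : ∀ x : ℝ, 0 ≤ x →
      ((b - a) * x ^ (1 / θ)) ^ (c - 1) = (b - a) ^ (c - 1) * x ^ (1 / θ * (c - 1)) :=
    fun x hx => by
      rw [Real.mul_rpow (sub_nonneg.mpr hab) (Real.rpow_nonneg hx _), ← Real.rpow_mul hx]
  have hscale : (b - a) ^ c = (b - a) * (b - a) ^ (c - 1) := by
    rw [← Real.rpow_one_add' (sub_nonneg.mpr hab) (by simpa using hc), add_sub_cancel]
  rw [← sub_sub_sub_cancel_left _ _ b, sub_thetaNet_of_le (by omega) hkn,
    sub_thetaNet_of_le (by omega) (by omega : k - 1 ≤ n), show n - (k - 1) = n - k + 1 by omega,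
    hpow _ (by positivity), hpow _ (by positivity), hscale]
  ring

lemma thetaNet_increment_mul_le (hθ : 0 < θ) (hθc : θ ≤ c) (hc : c ≤ 1) (hab : a ≤ b)
    (hk1 : 1 ≤ k) (hkn : k < n) :
    (thetaNet θ a b n k - thetaNet θ a b n (k - 1)) *
        ((b - thetaNet θ a b n k) ^ (c - 1) - (b - thetaNet θ a b n (k - 1)) ^ (c - 1))
      ≤ (b - a) ^ c * (1 / θ * ((1 - c) / θ) * 2 ^ (1 / θ - 1)) / n ^ 2 *
          (((n - k : ℕ) : ℝ) / n) ^ (c / θ - 2) := by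
  have hq : 1 ≤ 1 / θ := by rw [le_div_iff₀ hθ]; linarith
  have hn0 : (0 : ℝ) < n := by exact_mod_cast (Nat.zero_le k).trans_lt hkn
  have hz : 0 < ((n - k : ℕ) : ℝ) / n := div_pos (by norm_cast; omega) hn0
  have hzy : ((n - k : ℕ) : ℝ) / n < ((n - k + 1 : ℕ) : ℝ) / n := by gcongr; omega
  have hy : ((n - k + 1 : ℕ) : ℝ) / n ≤ 2 * (((n - k : ℕ) : ℝ) / n) := by
    rw [← mul_div_assoc]
    gcongr
    have : (1 : ℝ) ≤ (n - k : ℕ) := by norm_cast; omega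
    push_cast; linarith
  have hprod := rpow_sub_rpow_mul_rpow_sub_rpow_le hq
    (mul_nonpos_of_nonneg_of_nonpos (zero_le_one.trans hq) (by linarith : c - 1 ≤ 0)) hz hzy hy
  rw [thetaNet_increment_mul_eq (hθ.trans_le hθc).ne' hab hk1 hkn.le]
  calc _ ≤ (b - a) ^ c * (1 / θ * -(1 / θ * (c - 1)) * 2 ^ (1 / θ - 1) *
        (((n - k : ℕ) : ℝ) / n) ^ (1 / θ + 1 / θ * (c - 1) - 2) *
          (((n - k + 1 : ℕ) : ℝ) / n - ((n - k : ℕ) : ℝ) / n) ^ 2) := by gcongr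
    _ = _ := by
        rw [show 1 / θ + 1 / θ * (c - 1) - 2 = c / θ - 2 by ring]
        push_cast
        ring

lemma sub_thetaNet_pred_rpow_le (hθ : 0 < θ) (hθc : θ ≤ c) (hab : a ≤ b) (hn : 1 ≤ n) :
    (b - thetaNet θ a b n (n - 1)) ^ c ≤ (b - a) ^ c / n := by
  have hn0 : (0 : ℝ) < n := by exact_mod_cast hn
  rw [sub_thetaNet_of_le (by omega) (Nat.sub_le n 1), Nat.sub_sub_self hn, Nat.cast_one,
    Real.mul_rpow (sub_nonneg.mpr hab) (by positivity), ← Real.rpow_mul (by positivity),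
    div_eq_mul_one_div ((b - a) ^ c)]
  gcongr
  calc (1 / (n : ℝ)) ^ (1 / θ * c) ≤ (1 / n) ^ (1 : ℝ) :=
        Real.rpow_le_rpow_of_exponent_ge (by positivity)
          (div_le_one_of_le₀ (by exact_mod_cast hn) hn0.le)
          (by rw [one_div_mul_eq_div, le_div_iff₀ hθ]; linarith)
    _ = 1 / n := Real.rpow_one _

lemma exists_thetaNetVariation_le (hθ : 0 < θ) (hθc : θ < c) (hc : c ≤ 1) (hab : a < b) :
    ∃ K, 0 < K ∧ ∀ n : ℕ, 1 ≤ n → thetaNetVariation θ a b c n ≤ K / n := by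
  have hc0 : 0 < c := hθ.trans hθc
  have hβ : -1 < c / θ - 2 := by
    have : 1 < c / θ := by rw [lt_div_iff₀ hθ]; linarith
    linarith
  set A := (b - a) ^ c * (1 / θ * ((1 - c) / θ) * 2 ^ (1 / θ - 1))
  have hA : 0 ≤ A := by
    have : 0 ≤ 1 - c := by linarith
    have := sub_pos.mpr hab
    positivity
  set K₂ := 1 + 1 / (c / θ - 2 + 1)
  have hK₂ : 0 < K₂ := by have := one_div_pos.mpr (neg_lt_iff_pos_add.mp hβ); positivity
  refine ⟨A * K₂ + (b - a) ^ c / c, add_pos_of_nonneg_of_pos (mul_nonneg hA hK₂.le)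
    (div_pos (Real.rpow_pos_of_pos (sub_pos.mpr hab) c) hc0), fun n hn => ?_⟩
  have hn0 : (0 : ℝ) < n := by exact_mod_cast hn
  have hsum : ∑ k ∈ Finset.Ico 1 n, (((n - k : ℕ) : ℝ) / n) ^ (c / θ - 2) ≤ K₂ * n := by
    rw [Finset.sum_Ico_reflect (fun j => ((j : ℝ) / n) ^ (c / θ - 2)) 1 (Nat.le_succ n),
      Nat.add_sub_cancel_left, Nat.add_sub_cancel]
    exact sum_Ico_div_rpow_le hβ n
  calc thetaNetVariation θ a b c n
      ≤ ∑ k ∈ Finset.Ico 1 n, A / n ^ 2 * (((n - k : ℕ) : ℝ) / n) ^ (c / θ - 2) +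
          (b - a) ^ c / n / c := by
        refine add_le_add (Finset.sum_le_sum fun k hk => ?_)
          (div_le_div_of_nonneg_right (sub_thetaNet_pred_rpow_le hθ hθc.le hab.le hn) hc0.le)
        obtain ⟨hk1, hkn⟩ := Finset.mem_Ico.mp hk
        exact thetaNet_increment_mul_le hθ hθc.le hc hab.le hk1 hkn
    _ ≤ A / n ^ 2 * (K₂ * n) + (b - a) ^ c / n / c := by
        rw [← Finset.mul_sum]; gcongr
    _ = (A * K₂ + (b - a) ^ c / c) / n := by field_simp

lemma sum_setLIntegral_thetaNet_le {C : ℝ} (hθ : 0 < θ) (hab : a < b) (hc0 : 0 < c)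
    (hc1 : c ≤ 1) (hC : 0 ≤ C) {D : ℝ → ℝ → ℝ≥0∞}
    (hD : ∀ s t, a ≤ s → s ≤ t → t < b →
      D s t ≤ ENNReal.ofReal (C * ((b - t) ^ (c - 1) - (b - s) ^ (c - 1))))
    (hn : 1 ≤ n) :
    ∑ k ∈ Finset.Icc 1 n, ∫⁻ t in Set.Ico (thetaNet θ a b n (k - 1)) (thetaNet θ a b n k),
        D (thetaNet θ a b n (k - 1)) t
      ≤ ENNReal.ofReal (C * thetaNetVariation θ a b c n) := by
  set T := thetaNet θ a b n
  have hmono := monotoneOn_sub_rpow (b := b) hc1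
  have hT_le : ∀ {k}, 1 ≤ k → k ≤ n → T (k - 1) ≤ T k := fun hk1 hkn =>
    thetaNet_le_thetaNet hθ hab.le (Nat.sub_le _ _) hkn
  have hinner_nonneg : ∀ k ∈ Finset.Ico 1 n,
      0 ≤ C * ((T k - T (k - 1)) * ((b - T k) ^ (c - 1) - (b - T (k - 1)) ^ (c - 1))) := by
    intro k hk
    obtain ⟨hk1, hkn⟩ := Finset.mem_Ico.mp hk
    have hTk := thetaNet_lt (θ := θ) hab hkn
    exact mul_nonneg hC <| mul_nonneg (sub_nonneg.mpr (hT_le hk1 hkn.le)) (sub_nonneg.mpr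
      (hmono ((hT_le hk1 hkn.le).trans_lt hTk) hTk (hT_le hk1 hkn.le)))
  have hinner : ∀ k ∈ Finset.Ico 1 n,
      ∫⁻ t in Set.Ico (T (k - 1)) (T k), D (T (k - 1)) t
        ≤ ENNReal.ofReal (C * ((T k - T (k - 1)) *
            ((b - T k) ^ (c - 1) - (b - T (k - 1)) ^ (c - 1)))) := by
    intro k hk
    obtain ⟨hk1, hkn⟩ := Finset.mem_Ico.mp hk
    have hTk : T k < b := thetaNet_lt hab hkn
    have hFmono : MonotoneOn (fun u => C * (b - u) ^ (c - 1)) (Set.Icc (T (k - 1)) (T k)) :=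
      fun u hu v hv huv => mul_le_mul_of_nonneg_left
        (hmono (hu.2.trans_lt hTk) (hv.2.trans_lt hTk) huv) hC
    refine (setLIntegral_Ico_le_of_monotoneOn (hT_le hk1 hkn.le) hFmono fun u hu => ?_).trans_eq
      (by congr 1; ring)
    rw [← mul_sub]
    exact hD _ _ (a_le_thetaNet hθ hab.le (by omega)) hu.1 (hu.2.trans hTk)
  have hTn1 : T (n - 1) < b := thetaNet_lt hab (by omega)
  have hlast : ∫⁻ t in Set.Ico (T (n - 1)) (T n), D (T (n - 1)) t
      ≤ ENNReal.ofReal (C * ((b - T (n - 1)) ^ c / c)) := by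
    rw [show T n = b from thetaNet_self hθ (by omega), ENNReal.ofReal_mul hC,
      ← setLIntegral_Ico_sub_rpow hc0 hTn1.le, ← lintegral_const_mul' _ _ ENNReal.ofReal_ne_top]
    refine setLIntegral_mono (by fun_prop) fun u hu => ?_
    refine (hD _ _ (a_le_thetaNet hθ hab.le (by omega)) hu.1 hu.2).trans ?_
    rw [← ENNReal.ofReal_mul hC]
    gcongr
    have := Real.rpow_nonneg (sub_pos.mpr hTn1).le (c - 1)
    linarith
  have hlast_nonneg : 0 ≤ C * ((b - T (n - 1)) ^ c / c) :=
    mul_nonneg hC (div_nonneg (Real.rpow_nonneg (sub_pos.mpr hTn1).le _) hc0.le)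
  rw [← Finset.Ico_add_one_right_eq_Icc, Finset.sum_Ico_succ_top hn, thetaNetVariation,
    mul_add, Finset.mul_sum, ENNReal.ofReal_add (Finset.sum_nonneg hinner_nonneg) hlast_nonneg,
    ENNReal.ofReal_sum_of_nonneg hinner_nonneg]
  exact add_le_add (Finset.sum_le_sum hinner) hlast

end ThetaNet

theorem corollary_2_3_Z_part_abstract_general
    {Ω : Type*} {mΩ : MeasurableSpace Ω} (μ : Measure Ω)
    {d : ℕ}
    (p : ℝ≥0∞)
    (a b θ θ' c₁ : ℝ) (hab : a < b) (hθ : θ ∈ Set.Ioc (0 : ℝ) 1)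
    (hθ' : θ' ∈ Set.Ioo (0 : ℝ) θ) (hc₁ : 0 ≤ c₁)
    (Z : ℝ → Ω → EuclideanSpace ℝ (Fin d))
    (hZ : ∀ s t : ℝ, a ≤ s → s < t → t < b →
      eLpNorm (Z t - Z s) p μ
        ≤ ENNReal.ofReal (c₁ * (∫ r in s..t, (b - r) ^ (θ - 2)) ^ ((1 : ℝ) / 2))) :
    ∃ C : ℝ, 0 < C ∧ ∀ n : ℕ, 1 ≤ n →
      ∑ k ∈ Finset.Icc 1 n,
          ∫⁻ t in Set.Ico (thetaNet θ' a b n (k - 1)) (thetaNet θ' a b n k),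
            (eLpNorm (Z t - Z (thetaNet θ' a b n (k - 1))) p μ) ^ 2
        ≤ ENNReal.ofReal (C / n) := by
  obtain ⟨hθ'0, hθ'θ⟩ := hθ'
  obtain ⟨c, hθ'c, hcθ⟩ := exists_between hθ'θ
  have hc1 : c < 1 := hcθ.trans_le hθ.2
  obtain ⟨K, hK, hV⟩ := exists_thetaNetVariation_le hθ'0 hθ'c hc1.le hab
  set C₂ := c₁ ^ 2 * (b - a) ^ (θ - c) / (1 - c)
  have hC₂ : 0 ≤ C₂ := div_nonneg (by positivity) (by linarith)
  refine ⟨C₂ * K + 1, by positivity, fun n hn => ?_⟩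
  calc _ ≤ ENNReal.ofReal (C₂ * thetaNetVariation θ' a b c n) :=
        sum_setLIntegral_thetaNet_le hθ'0 hab (hθ'0.trans hθ'c) hc1.le hC₂
          (fun s t has hst htb => eLpNorm_sub_sq_le μ p hcθ.le hc1 hc₁ hZ has hst htb) hn
    _ ≤ ENNReal.ofReal ((C₂ * K + 1) / n) := by
        have hn0 : (0 : ℝ) < n := by exact_mod_cast hn
        gcongr
        calc C₂ * thetaNetVariation θ' a b c n ≤ C₂ * (K / n) := by gcongr; exact hV n hn
          _ ≤ (C₂ * K + 1) / n := by rw [mul_div_assoc']; gcongr; linarith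

/-- **Z-part of Corollary 2.3, abstract form.** If `(Z_t)_{t ∈ [a,b)} ⊆ L^p(μ)` is
`ℝ^d`-valued and satisfies `‖Z_t − Z_s‖_p ≤ c₁ (∫_s^t (b−r)^{θ−2} dr)^{1/2}` for
`a ≤ s < t < b`, then along the `θ'`-nets `(t_k)_{k=0}^n` with `0 < θ' < θ` there is a
constant `C > 0` with
`Σ_{k=1}^n ∫_{t_{k−1}}^{t_k} ‖Z_t − Z_{t_{k−1}}‖_p² dt ≤ C/n` for all `n ≥ 1`
(the `k = n` summand being the integral over `[t_{n−1}, b)`). -/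
theorem corollary_2_3_Z_part_abstract
    {Ω : Type*} {mΩ : MeasurableSpace Ω} (μ : Measure Ω) [IsProbabilityMeasure μ]
    {d : ℕ} (hd : 1 ≤ d)
    (p : ℝ≥0∞) (hp1 : 1 ≤ p) (hp2 : p ≠ ∞)
    (a b θ θ' c₁ : ℝ) (hab : a < b) (hθ : θ ∈ Set.Ioc (0 : ℝ) 1)
    (hθ' : θ' ∈ Set.Ioo (0 : ℝ) θ) (hc₁ : 0 ≤ c₁)
    (Z : ℝ → Ω → EuclideanSpace ℝ (Fin d))
    (hZLp : ∀ t ∈ Set.Ico a b, MemLp (Z t) p μ)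
    (hZ : ∀ s t : ℝ, a ≤ s → s < t → t < b →
      eLpNorm (Z t - Z s) p μ
        ≤ ENNReal.ofReal (c₁ * (∫ r in s..t, (b - r) ^ (θ - 2)) ^ ((1 : ℝ) / 2))) :
    ∃ C : ℝ, 0 < C ∧ ∀ n : ℕ, 1 ≤ n →
      ∑ k ∈ Finset.Icc 1 n,
          ∫⁻ t in Set.Ico (thetaNet θ' a b n (k - 1)) (thetaNet θ' a b n k),
            (eLpNorm (Z t - Z (thetaNet θ' a b n (k - 1))) p μ) ^ 2
        ≤ ENNReal.ofReal (C / n) :=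
  corollary_2_3_Z_part_abstract_general (mΩ := mΩ) μ p a b θ θ' c₁ hab hθ hθ' hc₁ Z hZ
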